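/- Let N ≥ 2, T > 0, and let ρ : [0,T] × ℝ^N → ℝ, u : [0,T] × ℝ^N → ℝ^N and F : [0,T] × ℝ^N → ℝ^{N×N} be smooth, with ρ > 0, and such that ρ − 1, u and F − I together with all of their space-time derivatives are bounded and lie in C([0,T]; L²(ℝ^N)). Assume they solve the transport equations ∂_t ρ + div(ρ u) = 0 and ∂_t F^{ij} + u^k ∂_k F^{ij} = ∂_k u^i F^{kj} (summation over repeated indices, for all i, j). If at time t = 0 one has, for all indices i, j, k, the constraints Σ_l ∂_l(ρ₀ F₀^{lk}) = 0 and F₀^{lk} ∂_l F₀^{ij} − F₀^{lj} ∂_l F₀^{ik} = 0 (summed over l), then these constraints hold at every time t ∈ [0,T]: Σ_l ∂_l(ρ F^{lk}) = 0 and F^{lk} ∂_l F^{ij} − F^{lj} ∂_l F^{ik} = 0 on [0,T] × ℝ^N. -/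

import Mathlib

open MeasureTheory ENNReal
open scoped FourierTransform ENNReal NNReal

noncomputable section

abbrev Rn (N : ℕ) := EuclideanSpace ℝ (Fin N)

/-- Littlewood–Paley data: a radial Schwartz function supported in the annulus
`3/4 ≤ ‖ξ‖ ≤ 8/3` whose dyadic dilates sum to `1` away from the origin. -/
structure LPData (N : ℕ) where
  φ : SchwartzMap (Rn N) ℝ
  radial : ∀ x y : Rn N, ‖x‖ = ‖y‖ → φ x = φ y
  supp : ∀ ξ : Rn N, φ ξ ≠ 0 → 3/4 ≤ ‖ξ‖ ∧ ‖ξ‖ ≤ 8/3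
  sum_one : ∀ ξ : Rn N, ξ ≠ 0 → HasSum (fun j : ℤ => φ ((2:ℝ) ^ (-j) • ξ)) 1

/-- Homogeneous dyadic block `Δ̇_j f = 𝓕⁻¹ (φ(2^{-j}·) 𝓕 f)`. -/
def dyadicBlock {N : ℕ} (P : LPData N) (j : ℤ) (f : Rn N → ℂ) : Rn N → ℂ :=
  𝓕⁻ (fun ξ => (P.φ ((2:ℝ) ^ (-j) • ξ) : ℂ) * 𝓕 f ξ)

/-- Low-frequency cut-off `Ṡ_j f = ∑_{k ≤ j-1} Δ̇_k f`. -/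
def sDot {N : ℕ} (P : LPData N) (j : ℤ) (f : Rn N → ℂ) : Rn N → ℂ :=
  fun x => ∑' k : {k : ℤ // k ≤ j - 1}, dyadicBlock P k f x

/-- `ℓ^r`-norm (in `ℝ≥0∞`) of a sequence indexed by `ℤ`. -/
def lpSeqNorm (r : ℝ≥0∞) (g : ℤ → ℝ≥0∞) : ℝ≥0∞ :=
  if r = ∞ then ⨆ j, g j else (∑' j, g j ^ r.toReal) ^ (1 / r.toReal)

/-- Homogeneous Besov norm `‖f‖_{Ḃ^s_{p,r}}`. -/
def besovNorm {N : ℕ} (P : LPData N) (s : ℝ) (p r : ℝ≥0∞) (f : Rn N → ℂ) : ℝ≥0∞ :=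
  lpSeqNorm r fun j =>
    ENNReal.ofReal ((2:ℝ) ^ ((j : ℝ) * s)) * eLpNorm (dyadicBlock P j f) p volume

/-- Truncated low-frequency Besov norm `‖f‖^ℓ_{Ḃ^s_{p,r}}` (frequencies `j ≤ k₀`). -/
def besovNormLow {N : ℕ} (P : LPData N) (k₀ : ℤ) (s : ℝ) (p r : ℝ≥0∞) (f : Rn N → ℂ) : ℝ≥0∞ :=
  lpSeqNorm r fun j =>
    if j ≤ k₀ then ENNReal.ofReal ((2:ℝ) ^ ((j : ℝ) * s)) * eLpNorm (dyadicBlock P j f) p volume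
    else 0

/-- Truncated high-frequency Besov norm `‖f‖^h_{Ḃ^s_{p,r}}` (frequencies `j > k₀`). -/
def besovNormHigh {N : ℕ} (P : LPData N) (k₀ : ℤ) (s : ℝ) (p r : ℝ≥0∞) (f : Rn N → ℂ) : ℝ≥0∞ :=
  lpSeqNorm r fun j =>
    if k₀ < j then ENNReal.ofReal ((2:ℝ) ^ ((j : ℝ) * s)) * eLpNorm (dyadicBlock P j f) p volume
    else 0

/-- Bony's paraproduct `T_f g = ∑_k Ṡ_{k-1} f · Δ̇_k g`. -/
def paraproduct {N : ℕ} (P : LPData N) (f g : Rn N → ℂ) : Rn N → ℂ :=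
  fun x => ∑' k : ℤ, sDot P (k - 1) f x * dyadicBlock P k g x

/-- Bony's remainder `R(f,g) = ∑_k Δ̇_k f · (Δ̇_{k-1} + Δ̇_k + Δ̇_{k+1}) g`. -/
def bonyRemainder {N : ℕ} (P : LPData N) (f g : Rn N → ℂ) : Rn N → ℂ :=
  fun x => ∑' k : ℤ, dyadicBlock P k f x *
    (dyadicBlock P (k - 1) g x + dyadicBlock P k g x + dyadicBlock P (k + 1) g x)

/-- Partial derivative `∂_i f`. -/
def pderiv' {N : ℕ} (i : Fin N) (f : Rn N → ℂ) : Rn N → ℂ :=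
  fun x => fderiv ℝ f x (EuclideanSpace.single i 1)

/-- Iterated partial derivative `∂^α f` associated with a multi-index `α`. -/
def mpderiv {N : ℕ} (α : Fin N → ℕ) (f : Rn N → ℂ) : Rn N → ℂ :=
  (List.finRange N).foldr (fun i g => (pderiv' i)^[α i] g) f

/-- The heat kernel `G_t(x) = (4πt)^{-N/2} exp(-|x|²/(4t))`. -/
def heatKernel (N : ℕ) (t : ℝ) (x : Rn N) : ℝ :=
  (4 * Real.pi * t) ^ (-(N : ℝ) / 2) * Real.exp (-‖x‖ ^ 2 / (4 * t))

/-- The heat semigroup `e^{tΔ} f = G_t * f`. -/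
def heatConv {N : ℕ} {E : Type*} [NormedAddCommGroup E] [NormedSpace ℝ E]
    (t : ℝ) (f : Rn N → E) : Rn N → E :=
  fun x => ∫ y, heatKernel N t (x - y) • f y

/-- The fractional derivative `Λ^s f = 𝓕⁻¹(|ξ|^s 𝓕 f)`. -/
def fracLap {N : ℕ} (s : ℝ) (f : Rn N → ℂ) : Rn N → ℂ :=
  𝓕⁻ (fun ξ => ((‖ξ‖ ^ s : ℝ) : ℂ) * 𝓕 f ξ)

/-- Time-Lebesgue norm on `(0,T)` of an `ℝ≥0∞`-valued function. -/
def timeLpNorm (ρ : ℝ≥0∞) (T : ℝ) (g : ℝ → ℝ≥0∞) : ℝ≥0∞ :=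
  if ρ = ∞ then essSup g (volume.restrict (Set.Ioo 0 T))
  else (∫⁻ t in Set.Ioo 0 T, g t ^ ρ.toReal) ^ (1 / ρ.toReal)

/-- Chemin–Lerner norm `‖f‖_{L̃^ρ_T(Ḃ^s_{p,r})}`. -/
def cheminLernerNorm {N : ℕ} (P : LPData N) (ρ : ℝ≥0∞) (T : ℝ) (s : ℝ) (p r : ℝ≥0∞)
    (f : ℝ → Rn N → ℂ) : ℝ≥0∞ :=
  lpSeqNorm r fun j =>
    ENNReal.ofReal ((2:ℝ) ^ ((j : ℝ) * s)) *
      timeLpNorm ρ T (fun t => eLpNorm (dyadicBlock P j (f t)) p volume)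

end

noncomputable section

/-- Spatial partial derivative `∂_k g` of a scalar field on `ℝ_t × ℝ^N_x`. -/
def sderiv {N : ℕ} (k : Fin N) (g : ℝ × Rn N → ℝ) (q : ℝ × Rn N) : ℝ :=
  fderiv ℝ g q ((0 : ℝ), EuclideanSpace.single k (1 : ℝ))

/-- Time derivative `∂_t g` of a scalar field on `ℝ_t × ℝ^N_x`. -/
def tderiv {N : ℕ} (g : ℝ × Rn N → ℝ) (q : ℝ × Rn N) : ℝ :=
  fderiv ℝ g q ((1 : ℝ), (0 : Rn N))

/-- `g` and all of its space-time derivatives are bounded on `[0,T] × ℝ^N` and lie in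
`C([0,T]; L²(ℝ^N))`. -/
def goodField (N : ℕ) (T : ℝ) (g : ℝ × Rn N → ℝ) : Prop :=
  (∀ n : ℕ, ∃ M : ℝ, ∀ q : ℝ × Rn N, q.1 ∈ Set.Icc 0 T → ‖iteratedFDeriv ℝ n g q‖ ≤ M) ∧
  (∀ n : ℕ, ∀ t ∈ Set.Icc 0 T,
    MeasureTheory.MemLp (fun x : Rn N => iteratedFDeriv ℝ n g (t, x)) 2 volume) ∧
  (∀ n : ℕ, ∀ t ∈ Set.Icc 0 T, ∀ ε : ℝ, 0 < ε → ∃ δ : ℝ, 0 < δ ∧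
    ∀ t' ∈ Set.Icc 0 T, |t' - t| < δ →
      eLpNorm (fun x : Rn N =>
        iteratedFDeriv ℝ n g (t', x) - iteratedFDeriv ℝ n g (t, x)) 2 volume <
        ENNReal.ofReal ε)

section AuxDev

noncomputable section DD
open Set

variable {E : Type*} [NormedAddCommGroup E] [NormedSpace ℝ E]

/-- Directional derivative. -/
def dd (v : E) (g : E → ℝ) (q : E) : ℝ := fderiv ℝ g q v

lemma dd_smooth {g : E → ℝ} (hg : ContDiff ℝ (⊤ : ℕ∞) g) (v : E) : ContDiff ℝ (⊤ : ℕ∞) (dd v g) :=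
  (hg.fderiv_right (by simp)).clm_apply contDiff_const

lemma dd_add {f g : E → ℝ} {q : E} (hf : DifferentiableAt ℝ f q) (hg : DifferentiableAt ℝ g q)
    (v : E) : dd v (fun q => f q + g q) q = dd v f q + dd v g q := by
  simp [dd, fderiv_fun_add hf hg]

lemma dd_mul {f g : E → ℝ} {q : E} (hf : DifferentiableAt ℝ f q) (hg : DifferentiableAt ℝ g q)
    (v : E) : dd v (fun q => f q * g q) q = f q * dd v g q + g q * dd v f q := by
  simp [dd, fderiv_fun_mul hf hg]

lemma dd_sum {ι : Type*} {s : Finset ι} {f : ι → E → ℝ} {q : E}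
    (hf : ∀ i ∈ s, DifferentiableAt ℝ (f i) q) (v : E) :
    dd v (fun q => ∑ i ∈ s, f i q) q = ∑ i ∈ s, dd v (f i) q := by
  simp [dd, fderiv_fun_sum hf]

lemma dd_sub {f g : E → ℝ} {q : E} (hf : DifferentiableAt ℝ f q) (hg : DifferentiableAt ℝ g q)
    (v : E) : dd v (fun q => f q - g q) q = dd v f q - dd v g q := by
  simp [dd, fderiv_fun_sub hf hg]

lemma dd_neg {f : E → ℝ} {q : E} (v : E) :
    dd v (fun q => -f q) q = -dd v f q := by
  simp [dd, fderiv_neg]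

lemma dd_comm {g : E → ℝ} (hg : ContDiff ℝ (⊤ : ℕ∞) g) (v w : E) (q : E) :
    dd v (dd w g) q = dd w (dd v g) q := by
  have hdiff : ∀ x, HasFDerivAt g (fderiv ℝ g x) x :=
    fun x => (hg.differentiable (by simp) x).hasFDerivAt
  have h2 : HasFDerivAt (fderiv ℝ g) (fderiv ℝ (fderiv ℝ g) q) q :=
    (((hg.fderiv_right (m := (⊤ : ℕ∞)) (by simp)).differentiable (by simp)) q).hasFDerivAt
  have key : ∀ a b : E, dd a (dd b g) q = fderiv ℝ (fderiv ℝ g) q a b := by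
    intro a b
    have : HasFDerivAt (fun x => fderiv ℝ g x b)
        ((ContinuousLinearMap.apply ℝ ℝ b).comp (fderiv ℝ (fderiv ℝ g) q)) q :=
      (ContinuousLinearMap.apply ℝ ℝ b).hasFDerivAt.comp q h2
    have e : dd a (dd b g) q = fderiv ℝ (fun x => fderiv ℝ g x b) q a := rfl
    rw [e, this.fderiv]; rfl
  rw [key, key, second_derivative_symmetric hdiff h2 v w]

end DD


noncomputable section

variable {N : ℕ}

lemma sderiv_eq_dd (k : Fin N) (g : ℝ × Rn N → ℝ) :
    sderiv k g = dd ((0 : ℝ), EuclideanSpace.single k (1 : ℝ)) g := rfl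

lemma tderiv_eq_dd (g : ℝ × Rn N → ℝ) : tderiv g = dd ((1 : ℝ), (0 : Rn N)) g := rfl

lemma dd_slice (g : ℝ × Rn N → ℝ) (t : ℝ) (x : Rn N)
    (hg : DifferentiableAt ℝ g (t, x)) (w : Rn N) :
    dd ((0 : ℝ), w) g (t, x) = fderiv ℝ (fun y => g (t, y)) x w := by
  have hι : HasFDerivAt (fun y : Rn N => ((t, y) : ℝ × Rn N))
      (ContinuousLinearMap.inr ℝ ℝ (Rn N)) x :=
    (hasFDerivAt_const t x).prodMk (hasFDerivAt_id x)
  have hc : HasFDerivAt (fun y => g (t, y))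
      ((fderiv ℝ g (t, x)).comp (ContinuousLinearMap.inr ℝ ℝ (Rn N))) x :=
    hg.hasFDerivAt.comp x hι
  rw [hc.fderiv]; rfl

lemma sderiv_congr_slice {g h : ℝ × Rn N → ℝ} {t : ℝ} {x : Rn N}
    (hg : DifferentiableAt ℝ g (t, x)) (hh : DifferentiableAt ℝ h (t, x))
    (heq : ∀ y, g (t, y) = h (t, y)) (k : Fin N) :
    sderiv k g (t, x) = sderiv k h (t, x) := by
  rw [sderiv_eq_dd, sderiv_eq_dd, dd_slice g t x hg, dd_slice h t x hh]
  have : (fun y => g (t, y)) = (fun y => h (t, y)) := funext heq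
  rw [this]

lemma euclid_decomp (w : Rn N) :
    ∑ m : Fin N, w m • EuclideanSpace.single m (1:ℝ) = w := by
  ext i
  rw [WithLp.ofLp_sum, Finset.sum_apply]
  simp only [PiLp.smul_apply, EuclideanSpace.single_apply, smul_eq_mul]
  simp

lemma fderiv_apply_decomp (g : ℝ × Rn N → ℝ) (q : ℝ × Rn N) (w : Rn N) :
    fderiv ℝ g q ((1 : ℝ), w) = tderiv g q + ∑ m, w m * sderiv m g q := by
  have hw : ((1:ℝ), w) = ((1:ℝ), (0 : Rn N)) +
      ∑ m : Fin N, w m • (((0:ℝ), EuclideanSpace.single m (1:ℝ)) : ℝ × Rn N) := by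
    have h1 : (∑ m : Fin N, w m • (((0:ℝ), EuclideanSpace.single m (1:ℝ)) : ℝ × Rn N)) =
        (((0:ℝ), w) : ℝ × Rn N) := by
      have := euclid_decomp w
      rw [Prod.ext_iff, Prod.fst_sum, Prod.snd_sum]
      constructor
      · simp
      · simpa using this
    rw [h1]; ext <;> simp
  rw [hw, map_add, map_sum]
  congr 1
  refine Finset.sum_congr rfl fun m _ => ?_
  rw [_root_.map_smul]
  rfl

end

section AlgebraA

variable {N : ℕ}

lemma doubling {G : Fin N → Fin N → ℝ} (h : ∀ l m, G l m + G m l = 0) :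
    ∑ l, ∑ m, G l m = 0 := by
  have h2 : (∑ l, ∑ m, G l m) + (∑ l, ∑ m, G l m) = 0 := by
    nth_rewrite 2 [Finset.sum_comm]
    rw [← Finset.sum_add_distrib]
    rw [show (∑ l : Fin N, (∑ m, G l m + ∑ m, G m l)) = ∑ l : Fin N, ∑ m, (G l m + G m l) from
      Finset.sum_congr rfl fun l _ => (Finset.sum_add_distrib).symm]
    exact Finset.sum_eq_zero fun l _ => Finset.sum_eq_zero fun m _ => h l m
  linarith

lemma algebraA (aU : Fin N → ℝ) (dU : Fin N → Fin N → ℝ) (sP : Fin N → Fin N → ℝ)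
    (pV : Fin N → ℝ) (ddU : Fin N → Fin N → Fin N → ℝ) (ddP : Fin N → Fin N → Fin N → ℝ)
    (hU : ∀ l m i, ddU l m i = ddU m l i) (hP : ∀ l m j, ddP l m j = ddP m l j) :
    (∑ l, (-(∑ m, (dU l m * sP m l + aU m * ddP l m l + ddU l m m * pV l + dU m m * sP l l))
        + ∑ m, (ddU l m l * pV m + dU m l * sP l m)))
      + ∑ m, aU m * ∑ l, ddP m l l
      + (∑ m, dU m m) * (∑ l, sP l l) = 0 := by
  have h1 : ∑ m : Fin N, aU m * ∑ l, ddP m l l = ∑ l, ∑ m, aU m * ddP m l l := by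
    rw [Finset.sum_comm]
    exact Finset.sum_congr rfl fun m _ => Finset.mul_sum _ _ _
  have h2 : (∑ m : Fin N, dU m m) * (∑ l : Fin N, sP l l) = ∑ l, ∑ m, dU m m * sP l l := by
    rw [Finset.sum_mul_sum]
    exact Finset.sum_comm
  rw [h1, h2, ← Finset.sum_add_distrib, ← Finset.sum_add_distrib]
  have key : ∀ l, (-(∑ m, (dU l m * sP m l + aU m * ddP l m l + ddU l m m * pV l + dU m m * sP l l))
        + ∑ m, (ddU l m l * pV m + dU m l * sP l m)) + ∑ m, aU m * ddP m l l + ∑ m, dU m m * sP l l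
      = ∑ m, (-(dU l m * sP m l + aU m * ddP l m l + ddU l m m * pV l + dU m m * sP l l)
        + (ddU l m l * pV m + dU m l * sP l m) + aU m * ddP m l l + dU m m * sP l l) := by
    intro l
    symm
    rw [Finset.sum_add_distrib, Finset.sum_add_distrib, Finset.sum_add_distrib,
      Finset.sum_neg_distrib]
  rw [Finset.sum_congr rfl fun l _ => key l]
  refine doubling fun l m => ?_
  simp only [hU m l, hP m l]
  ring

end AlgebraA
section Transport

variable {N : ℕ} {ρ : ℝ × Rn N → ℝ} {u : ℝ × Rn N → Fin N → ℝ}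
  {Fd : ℝ × Rn N → Fin N → Fin N → ℝ}

lemma slabP (hρ : ContDiff ℝ (⊤ : ℕ∞) ρ) (hu : ∀ i, ContDiff ℝ (⊤ : ℕ∞) fun q => u q i)
    (hFd : ∀ i j, ContDiff ℝ (⊤ : ℕ∞) fun q => Fd q i j) {t : ℝ}
    (hmass_t : ∀ y : Rn N, tderiv ρ (t, y) + ∑ m, sderiv m (fun q => ρ q * u q m) (t, y) = 0)
    (hdef_t : ∀ (y : Rn N) (i j : Fin N),
      tderiv (fun q => Fd q i j) (t, y) +
        ∑ m, u (t, y) m * sderiv m (fun q => Fd q i j) (t, y) =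
        ∑ m, sderiv m (fun q => u q i) (t, y) * Fd (t, y) m j)
    (l k : Fin N) (y : Rn N) :
    tderiv (fun q => ρ q * Fd q l k) (t, y) =
      -(∑ m, sderiv m (fun q => u q m * (ρ q * Fd q l k)) (t, y))
      + ∑ m, sderiv m (fun q => u q l) (t, y) * (ρ (t, y) * Fd (t, y) m k) := by
  have dρ : DifferentiableAt ℝ ρ (t, y) := (hρ.differentiable (by simp)) _
  have dF : ∀ i j, DifferentiableAt ℝ (fun q => Fd q i j) (t, y) :=
    fun i j => ((hFd i j).differentiable (by simp)) _
  have du : ∀ i, DifferentiableAt ℝ (fun q => u q i) (t, y) :=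
    fun i => ((hu i).differentiable (by simp)) _
  have dP : ∀ l' k', DifferentiableAt ℝ (fun q => ρ q * Fd q l' k') (t, y) :=
    fun l' k' => ((hρ.mul (hFd l' k')).differentiable (by simp)) _
  have e1 : tderiv (fun q => ρ q * Fd q l k) (t, y)
      = ρ (t, y) * tderiv (fun q => Fd q l k) (t, y) + Fd (t, y) l k * tderiv ρ (t, y) := by
    simp only [tderiv_eq_dd]
    exact dd_mul dρ (dF l k) _
  have e2 : ∀ m, sderiv m (fun q => u q m * (ρ q * Fd q l k)) (t, y)
      = u (t, y) m * sderiv m (fun q => ρ q * Fd q l k) (t, y)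
        + (ρ (t, y) * Fd (t, y) l k) * sderiv m (fun q => u q m) (t, y) := by
    intro m
    simp only [sderiv_eq_dd]
    exact dd_mul (du m) (dP l k) _
  have e3 : ∀ m, sderiv m (fun q => ρ q * Fd q l k) (t, y)
      = ρ (t, y) * sderiv m (fun q => Fd q l k) (t, y)
        + Fd (t, y) l k * sderiv m ρ (t, y) := by
    intro m
    simp only [sderiv_eq_dd]
    exact dd_mul dρ (dF l k) _
  have e4 : ∀ m, sderiv m (fun q => ρ q * u q m) (t, y)
      = ρ (t, y) * sderiv m (fun q => u q m) (t, y) + u (t, y) m * sderiv m ρ (t, y) := by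
    intro m
    simp only [sderiv_eq_dd]
    exact dd_mul dρ (du m) _
  have h0 := hmass_t y
  have h1 := hdef_t y l k
  have hρt : tderiv ρ (t, y) = -∑ m, sderiv m (fun q => ρ q * u q m) (t, y) := by linarith
  have hFt : tderiv (fun q => Fd q l k) (t, y)
      = ∑ m, sderiv m (fun q => u q l) (t, y) * Fd (t, y) m k
        - ∑ m, u (t, y) m * sderiv m (fun q => Fd q l k) (t, y) := by linarith
  have S1 : ∑ m, sderiv m (fun q => u q m * (ρ q * Fd q l k)) (t, y)
      = ρ (t, y) * (∑ m, u (t, y) m * sderiv m (fun q => Fd q l k) (t, y))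
        + Fd (t, y) l k * (∑ m, u (t, y) m * sderiv m ρ (t, y))
        + (ρ (t, y) * Fd (t, y) l k) * (∑ m, sderiv m (fun q => u q m) (t, y)) := by
    rw [Finset.mul_sum, Finset.mul_sum, Finset.mul_sum, ← Finset.sum_add_distrib,
      ← Finset.sum_add_distrib]
    refine Finset.sum_congr rfl fun m _ => ?_
    rw [e2 m, e3 m]; ring
  have S0 : ∑ m, sderiv m (fun q => ρ q * u q m) (t, y)
      = ρ (t, y) * (∑ m, sderiv m (fun q => u q m) (t, y))
        + ∑ m, u (t, y) m * sderiv m ρ (t, y) := by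
    rw [Finset.mul_sum, ← Finset.sum_add_distrib]
    refine Finset.sum_congr rfl fun m _ => ?_
    rw [e4 m]
  have S4 : ∑ m, sderiv m (fun q => u q l) (t, y) * (ρ (t, y) * Fd (t, y) m k)
      = ρ (t, y) * ∑ m, sderiv m (fun q => u q l) (t, y) * Fd (t, y) m k := by
    rw [Finset.mul_sum]
    exact Finset.sum_congr rfl fun m _ => by ring
  rw [e1, hρt, hFt, S1, S4, S0]
  ring

end Transport
section AlgebraA'

lemma algebraA' {N : ℕ} (aU pV : Fin N → ℝ) (dU sP : Fin N → Fin N → ℝ)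
    (ddU ddP ddQ : Fin N → Fin N → Fin N → ℝ)
    (hU : ∀ l m i, ddU l m i = ddU m l i) (hQP : ∀ a b j, ddQ a b j = ddP b a j) :
    (∑ l, (-(∑ m, (aU m * ddP l m l + sP m l * dU l m + pV l * ddU l m m + dU m m * sP l l))
        + ∑ m, (dU m l * sP l m + pV m * ddU l m l)))
      + ∑ m, aU m * (∑ l, ddQ m l l)
      + (∑ m, dU m m) * (∑ l, sP l l) = 0 := by
  have h1 : ∑ m : Fin N, aU m * (∑ l, ddQ m l l) = ∑ l, ∑ m, aU m * ddQ m l l := by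
    rw [Finset.sum_comm]
    exact Finset.sum_congr rfl fun m _ => Finset.mul_sum _ _ _
  have h2 : (∑ m : Fin N, dU m m) * (∑ l : Fin N, sP l l) = ∑ l, ∑ m, dU m m * sP l l := by
    rw [Finset.sum_mul_sum]
    exact Finset.sum_comm
  rw [h1, h2, ← Finset.sum_add_distrib, ← Finset.sum_add_distrib]
  have key : ∀ l, (-(∑ m, (aU m * ddP l m l + sP m l * dU l m + pV l * ddU l m m + dU m m * sP l l))
        + ∑ m, (dU m l * sP l m + pV m * ddU l m l)) + ∑ m, aU m * ddQ m l l
        + ∑ m, dU m m * sP l l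
      = ∑ m, (-(aU m * ddP l m l + sP m l * dU l m + pV l * ddU l m m + dU m m * sP l l)
        + (dU m l * sP l m + pV m * ddU l m l) + aU m * ddQ m l l + dU m m * sP l l) := by
    intro l
    symm
    rw [Finset.sum_add_distrib, Finset.sum_add_distrib, Finset.sum_add_distrib,
      Finset.sum_neg_distrib]
  rw [Finset.sum_congr rfl fun l _ => key l]
  refine doubling fun l m => ?_
  simp only [hQP, hU m l]
  ring

end AlgebraA'

section TransportA

variable {N : ℕ} {ρ : ℝ × Rn N → ℝ} {u : ℝ × Rn N → Fin N → ℝ}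
  {Fd : ℝ × Rn N → Fin N → Fin N → ℝ}

lemma transportA (hρ : ContDiff ℝ (⊤ : ℕ∞) ρ) (hu : ∀ i, ContDiff ℝ (⊤ : ℕ∞) fun q => u q i)
    (hFd : ∀ i j, ContDiff ℝ (⊤ : ℕ∞) fun q => Fd q i j) {t : ℝ}
    (hmass_t : ∀ y : Rn N, tderiv ρ (t, y) + ∑ m, sderiv m (fun q => ρ q * u q m) (t, y) = 0)
    (hdef_t : ∀ (y : Rn N) (i j : Fin N),
      tderiv (fun q => Fd q i j) (t, y) +
        ∑ m, u (t, y) m * sderiv m (fun q => Fd q i j) (t, y) =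
        ∑ m, sderiv m (fun q => u q i) (t, y) * Fd (t, y) m j)
    (x : Rn N) (k : Fin N) :
    tderiv (fun q => ∑ l, sderiv l (fun q' => ρ q' * Fd q' l k) q) (t, x)
      + ∑ m, u (t, x) m * sderiv m (fun q => ∑ l, sderiv l (fun q' => ρ q' * Fd q' l k) q) (t, x)
      + (∑ m, sderiv m (fun q => u q m) (t, x)) *
          (∑ l, sderiv l (fun q' => ρ q' * Fd q' l k) (t, x)) = 0 := by
  classical
  have hP : ∀ l' k', ContDiff ℝ (⊤ : ℕ∞) (fun q => ρ q * Fd q l' k') := fun _ _ => hρ.mul (hFd _ _)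
  have hsg : ∀ (g : ℝ × Rn N → ℝ), ContDiff ℝ (⊤ : ℕ∞) g → ∀ m : Fin N,
      ContDiff ℝ (⊤ : ℕ∞) (sderiv m g) := by
    intro g hg m; rw [sderiv_eq_dd]; exact dd_smooth hg _
  have htg : ∀ (g : ℝ × Rn N → ℝ), ContDiff ℝ (⊤ : ℕ∞) g → ContDiff ℝ (⊤ : ℕ∞) (tderiv g) := by
    intro g hg; rw [tderiv_eq_dd]; exact dd_smooth hg _
  have dAt : ∀ (g : ℝ × Rn N → ℝ), ContDiff ℝ (⊤ : ℕ∞) g → ∀ q, DifferentiableAt ℝ g q :=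
    fun g hg q => (hg.differentiable (by simp)) q
  -- the W functions
  set W : Fin N → (ℝ × Rn N → ℝ) := fun l q =>
    -(∑ m, sderiv m (fun q' => u q' m * (ρ q' * Fd q' l k)) q)
    + ∑ m, sderiv m (fun q' => u q' l) q * (ρ q * Fd q m k) with hW
  have hWs : ∀ l, ContDiff ℝ (⊤ : ℕ∞) (W l) := by
    intro l
    refine ContDiff.add (ContDiff.neg ?_) ?_
    · exact ContDiff.sum fun m _ => hsg _ ((hu m).mul (hP l k)) m
    · exact ContDiff.sum fun m _ => (hsg _ (hu l) m).mul (hP m k)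
  -- step 1+2 : time derivative of A
  have st12 : tderiv (fun q => ∑ l, sderiv l (fun q' => ρ q' * Fd q' l k) q) (t, x)
      = ∑ l, sderiv l (W l) (t, x) := by
    rw [tderiv_eq_dd,
      dd_sum (fun l _ => dAt _ (hsg _ (hP l k) l) _) ((1:ℝ), (0 : Rn N))]
    refine Finset.sum_congr rfl fun l _ => ?_
    have c1 : dd ((1:ℝ), (0 : Rn N)) (sderiv l (fun q' => ρ q' * Fd q' l k)) (t, x)
        = sderiv l (tderiv (fun q' => ρ q' * Fd q' l k)) (t, x) := by
      rw [sderiv_eq_dd, sderiv_eq_dd, tderiv_eq_dd]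
      exact dd_comm (hP l k) _ _ _
    rw [c1]
    exact sderiv_congr_slice (dAt _ (htg _ (hP l k)) _) (dAt _ (hWs l) _)
      (fun y => slabP hρ hu hFd hmass_t hdef_t l k y) l
  -- step 3 : expand sderiv l (W l)
  have inner_eq : ∀ l m : Fin N, sderiv m (fun q' => u q' m * (ρ q' * Fd q' l k))
      = fun q => u q m * sderiv m (fun q' => ρ q' * Fd q' l k) q
        + (ρ q * Fd q l k) * sderiv m (fun q' => u q' m) q := by
    intro l m; funext q
    simp only [sderiv_eq_dd]
    exact dd_mul (dAt _ (hu m) q) (dAt _ (hP l k) q) _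
  have st3 : ∀ l, sderiv l (W l) (t, x)
      = -(∑ m, (u (t, x) m * sderiv l (sderiv m (fun q' => ρ q' * Fd q' l k)) (t, x)
            + sderiv m (fun q' => ρ q' * Fd q' l k) (t, x) * sderiv l (fun q => u q m) (t, x)
            + (ρ (t, x) * Fd (t, x) l k) * sderiv l (sderiv m (fun q => u q m)) (t, x)
            + sderiv m (fun q => u q m) (t, x) * sderiv l (fun q' => ρ q' * Fd q' l k) (t, x)))
        + ∑ m, (sderiv m (fun q => u q l) (t, x) * sderiv l (fun q' => ρ q' * Fd q' m k) (t, x)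
            + (ρ (t, x) * Fd (t, x) m k) * sderiv l (sderiv m (fun q => u q l)) (t, x)) := by
    intro l
    rw [hW]
    simp only []
    have dneg : DifferentiableAt ℝ
        (fun q => -(∑ m, sderiv m (fun q' => u q' m * (ρ q' * Fd q' l k)) q)) (t, x) :=
      (dAt _ (ContDiff.sum fun m _ => hsg _ ((hu m).mul (hP l k)) m) _).neg
    have dsum2 : DifferentiableAt ℝ
        (fun q => ∑ m, sderiv m (fun q' => u q' l) q * (ρ q * Fd q m k)) (t, x) :=
      dAt _ (ContDiff.sum fun m _ => (hsg _ (hu l) m).mul (hP m k)) _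
    rw [show sderiv l (fun q =>
        -(∑ m, sderiv m (fun q' => u q' m * (ρ q' * Fd q' l k)) q)
        + ∑ m, sderiv m (fun q' => u q' l) q * (ρ q * Fd q m k)) (t, x)
      = sderiv l (fun q => -(∑ m, sderiv m (fun q' => u q' m * (ρ q' * Fd q' l k)) q)) (t, x)
        + sderiv l (fun q => ∑ m, sderiv m (fun q' => u q' l) q * (ρ q * Fd q m k)) (t, x) from by
        simp only [sderiv_eq_dd]; exact dd_add dneg dsum2 _]
    congr 1
    · -- negative part
      rw [show sderiv l (fun q =>
          -(∑ m, sderiv m (fun q' => u q' m * (ρ q' * Fd q' l k)) q)) (t, x)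
        = -(sderiv l (fun q => ∑ m, sderiv m (fun q' => u q' m * (ρ q' * Fd q' l k)) q) (t, x))
          from by simp only [sderiv_eq_dd]; exact dd_neg _]
      congr 1
      rw [show sderiv l (fun q => ∑ m, sderiv m (fun q' => u q' m * (ρ q' * Fd q' l k)) q) (t, x)
        = ∑ m, sderiv l (sderiv m (fun q' => u q' m * (ρ q' * Fd q' l k))) (t, x) from by
          simp only [sderiv_eq_dd]
          exact dd_sum (fun m _ => dAt _ (hsg _ ((hu m).mul (hP l k)) m) _) _]
      refine Finset.sum_congr rfl fun m _ => ?_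
      rw [inner_eq l m]
      have d1 : DifferentiableAt ℝ
          (fun q => u q m * sderiv m (fun q' => ρ q' * Fd q' l k) q) (t, x) :=
        dAt _ ((hu m).mul (hsg _ (hP l k) m)) _
      have d2 : DifferentiableAt ℝ
          (fun q => (ρ q * Fd q l k) * sderiv m (fun q' => u q' m) q) (t, x) :=
        dAt _ ((hP l k).mul (hsg _ (hu m) m)) _
      rw [show sderiv l (fun q => u q m * sderiv m (fun q' => ρ q' * Fd q' l k) q
          + (ρ q * Fd q l k) * sderiv m (fun q' => u q' m) q) (t, x)
        = sderiv l (fun q => u q m * sderiv m (fun q' => ρ q' * Fd q' l k) q) (t, x)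
          + sderiv l (fun q => (ρ q * Fd q l k) * sderiv m (fun q' => u q' m) q) (t, x) from by
          simp only [sderiv_eq_dd]; exact dd_add d1 d2 _]
      rw [show sderiv l (fun q => u q m * sderiv m (fun q' => ρ q' * Fd q' l k) q) (t, x)
        = u (t, x) m * sderiv l (sderiv m (fun q' => ρ q' * Fd q' l k)) (t, x)
          + sderiv m (fun q' => ρ q' * Fd q' l k) (t, x) * sderiv l (fun q => u q m) (t, x) from by
          simp only [sderiv_eq_dd]
          exact dd_mul (dAt _ (hu m) _) (dAt _ (hsg _ (hP l k) m) _) _]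
      rw [show sderiv l (fun q => (ρ q * Fd q l k) * sderiv m (fun q' => u q' m) q) (t, x)
        = (ρ (t, x) * Fd (t, x) l k) * sderiv l (sderiv m (fun q => u q m)) (t, x)
          + sderiv m (fun q => u q m) (t, x) * sderiv l (fun q' => ρ q' * Fd q' l k) (t, x) from by
          simp only [sderiv_eq_dd]
          exact dd_mul (dAt _ (hP l k) _) (dAt _ (hsg _ (hu m) m) _) _]
      ring
    · -- positive part
      rw [show sderiv l (fun q => ∑ m, sderiv m (fun q' => u q' l) q * (ρ q * Fd q m k)) (t, x)
        = ∑ m, sderiv l (fun q => sderiv m (fun q' => u q' l) q * (ρ q * Fd q m k)) (t, x) from by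
          simp only [sderiv_eq_dd]
          exact dd_sum (fun m _ => dAt _ ((hsg _ (hu l) m).mul (hP m k)) _) _]
      refine Finset.sum_congr rfl fun m _ => ?_
      rw [show sderiv l (fun q => sderiv m (fun q' => u q' l) q * (ρ q * Fd q m k)) (t, x)
        = sderiv m (fun q => u q l) (t, x) * sderiv l (fun q' => ρ q' * Fd q' m k) (t, x)
          + (ρ (t, x) * Fd (t, x) m k) * sderiv l (sderiv m (fun q => u q l)) (t, x) from by
          simp only [sderiv_eq_dd]
          exact dd_mul (dAt _ (hsg _ (hu l) m) _) (dAt _ (hP m k) _) _]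
  -- expand the middle term
  have stmid : ∀ m : Fin N,
      sderiv m (fun q => ∑ l, sderiv l (fun q' => ρ q' * Fd q' l k) q) (t, x)
      = ∑ l, sderiv m (sderiv l (fun q' => ρ q' * Fd q' l k)) (t, x) := by
    intro m
    simp only [sderiv_eq_dd]
    exact dd_sum (fun l _ => dAt _ (hsg _ (hP l k) l) _) _
  have mid' : ∑ m, u (t, x) m *
        sderiv m (fun q => ∑ l, sderiv l (fun q' => ρ q' * Fd q' l k) q) (t, x)
      = ∑ m, u (t, x) m * ∑ l, sderiv m (sderiv l (fun q' => ρ q' * Fd q' l k)) (t, x) :=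
    Finset.sum_congr rfl fun m _ => by rw [stmid m]
  rw [st12, Finset.sum_congr rfl fun l _ => st3 l, mid']
  exact algebraA' (fun m => u (t, x) m) (fun l => ρ (t, x) * Fd (t, x) l k)
    (fun a b => sderiv a (fun q => u q b) (t, x))
    (fun a b => sderiv a (fun q' => ρ q' * Fd q' b k) (t, x))
    (fun a b i => sderiv a (sderiv b (fun q => u q i)) (t, x))
    (fun a b j => sderiv a (sderiv b (fun q' => ρ q' * Fd q' j k)) (t, x))
    (fun a b j => sderiv a (sderiv b (fun q' => ρ q' * Fd q' j k)) (t, x))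
    (fun a b i => by simp only [sderiv_eq_dd]; exact dd_comm (hu i) _ _ _)
    (fun a b j => by simp only [sderiv_eq_dd]; exact dd_comm (hP j k) _ _ _)

end TransportA
section AlgebraB

lemma sum_helper1 {N : ℕ} (c : ℝ) (X Y : Fin N → ℝ) :
    c * (-(∑ m, X m) + ∑ m, Y m) = ∑ m, (c * Y m - c * X m) := by
  rw [mul_add, mul_neg, Finset.mul_sum, Finset.mul_sum, neg_add_eq_sub,
    ← Finset.sum_sub_distrib]

lemma sum_helper2 {N : ℕ} (c : ℝ) (X Y : Fin N → ℝ) :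
    c * (∑ m, X m - ∑ m, Y m) = ∑ m, (c * X m - c * Y m) := by
  rw [mul_sub, Finset.mul_sum, Finset.mul_sum, ← Finset.sum_sub_distrib]

lemma algebraB {N : ℕ} (aU : Fin N → ℝ) (dU fV : Fin N → Fin N → ℝ)
    (gD ddU : Fin N → Fin N → Fin N → ℝ)
    (ddF : Fin N → Fin N → Fin N → Fin N → ℝ) (i j k : Fin N)
    (hU : ∀ a b i', ddU a b i' = ddU b a i')
    (hF : ∀ a b c d, ddF a b c d = ddF b a c d) :
    (∑ l, (fV l k * (-(∑ m, (aU m * ddF l m i j + gD m i j * dU l m))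
              + ∑ m, (dU m i * gD l m j + fV m j * ddU l m i))
          + gD l i j * (∑ m, dU m l * fV m k - ∑ m, aU m * gD m l k)
        - (fV l j * (-(∑ m, (aU m * ddF l m i k + gD m i k * dU l m))
              + ∑ m, (dU m i * gD l m k + fV m k * ddU l m i))
          + gD l i k * (∑ m, dU m l * fV m j - ∑ m, aU m * gD m l j))))
      + ∑ m, aU m * (∑ l, (fV l k * ddF m l i j + gD l i j * gD m l k
          - (fV l j * ddF m l i k + gD l i k * gD m l j)))
      - ∑ m, dU m i * (∑ l, (fV l k * gD l m j - fV l j * gD l m k)) = 0 := by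
  have h1 : ∑ m : Fin N, aU m * (∑ l, (fV l k * ddF m l i j + gD l i j * gD m l k
        - (fV l j * ddF m l i k + gD l i k * gD m l j)))
      = ∑ l, ∑ m, aU m * (fV l k * ddF m l i j + gD l i j * gD m l k
        - (fV l j * ddF m l i k + gD l i k * gD m l j)) := by
    rw [Finset.sum_comm]
    exact Finset.sum_congr rfl fun m _ => Finset.mul_sum _ _ _
  have h2 : ∑ m : Fin N, dU m i * (∑ l, (fV l k * gD l m j - fV l j * gD l m k))
      = ∑ l, ∑ m, dU m i * (fV l k * gD l m j - fV l j * gD l m k) := by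
    rw [Finset.sum_comm]
    exact Finset.sum_congr rfl fun m _ => Finset.mul_sum _ _ _
  rw [h1, h2, ← Finset.sum_add_distrib, ← Finset.sum_sub_distrib]
  have key : ∀ l, ((fV l k * (-(∑ m, (aU m * ddF l m i j + gD m i j * dU l m))
              + ∑ m, (dU m i * gD l m j + fV m j * ddU l m i))
          + gD l i j * (∑ m, dU m l * fV m k - ∑ m, aU m * gD m l k)
        - (fV l j * (-(∑ m, (aU m * ddF l m i k + gD m i k * dU l m))
              + ∑ m, (dU m i * gD l m k + fV m k * ddU l m i))
          + gD l i k * (∑ m, dU m l * fV m j - ∑ m, aU m * gD m l j)))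
        + ∑ m, aU m * (fV l k * ddF m l i j + gD l i j * gD m l k
          - (fV l j * ddF m l i k + gD l i k * gD m l j)))
        - ∑ m, dU m i * (fV l k * gD l m j - fV l j * gD l m k)
      = ∑ m, ((fV l k * (dU m i * gD l m j + fV m j * ddU l m i)
            - fV l k * (aU m * ddF l m i j + gD m i j * dU l m)
          + (gD l i j * (dU m l * fV m k) - gD l i j * (aU m * gD m l k))
        - (fV l j * (dU m i * gD l m k + fV m k * ddU l m i)
            - fV l j * (aU m * ddF l m i k + gD m i k * dU l m)
          + (gD l i k * (dU m l * fV m j) - gD l i k * (aU m * gD m l j)))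
        + aU m * (fV l k * ddF m l i j + gD l i j * gD m l k
          - (fV l j * ddF m l i k + gD l i k * gD m l j)))
        - dU m i * (fV l k * gD l m j - fV l j * gD l m k)) := by
    intro l
    rw [sum_helper1, sum_helper1, sum_helper2, sum_helper2,
      ← Finset.sum_add_distrib, ← Finset.sum_add_distrib, ← Finset.sum_sub_distrib,
      ← Finset.sum_add_distrib, ← Finset.sum_sub_distrib]
  rw [Finset.sum_congr rfl fun l _ => key l]
  refine doubling fun l m => ?_
  simp only [hU m l, hF m l]
  ring

end AlgebraB
section TransportB

variable {N : ℕ} {u : ℝ × Rn N → Fin N → ℝ} {Fd : ℝ × Rn N → Fin N → Fin N → ℝ}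

lemma transportB (hu : ∀ i, ContDiff ℝ (⊤ : ℕ∞) fun q => u q i)
    (hFd : ∀ i j, ContDiff ℝ (⊤ : ℕ∞) fun q => Fd q i j) {t : ℝ}
    (hdef_t : ∀ (y : Rn N) (i j : Fin N),
      tderiv (fun q => Fd q i j) (t, y) +
        ∑ m, u (t, y) m * sderiv m (fun q => Fd q i j) (t, y) =
        ∑ m, sderiv m (fun q => u q i) (t, y) * Fd (t, y) m j)
    (x : Rn N) (i j k : Fin N) :
    tderiv (fun q => ∑ l, (Fd q l k * sderiv l (fun q' => Fd q' i j) q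
        - Fd q l j * sderiv l (fun q' => Fd q' i k) q)) (t, x)
      + ∑ m, u (t, x) m * sderiv m (fun q => ∑ l, (Fd q l k * sderiv l (fun q' => Fd q' i j) q
          - Fd q l j * sderiv l (fun q' => Fd q' i k) q)) (t, x)
      - ∑ m, sderiv m (fun q => u q i) (t, x) *
          (∑ l, (Fd (t, x) l k * sderiv l (fun q' => Fd q' m j) (t, x)
            - Fd (t, x) l j * sderiv l (fun q' => Fd q' m k) (t, x))) = 0 := by
  classical
  have hsg : ∀ (g : ℝ × Rn N → ℝ), ContDiff ℝ (⊤ : ℕ∞) g → ∀ m : Fin N,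
      ContDiff ℝ (⊤ : ℕ∞) (sderiv m g) := by
    intro g hg m; rw [sderiv_eq_dd]; exact dd_smooth hg _
  have htg : ∀ (g : ℝ × Rn N → ℝ), ContDiff ℝ (⊤ : ℕ∞) g → ContDiff ℝ (⊤ : ℕ∞) (tderiv g) := by
    intro g hg; rw [tderiv_eq_dd]; exact dd_smooth hg _
  have dAt : ∀ (g : ℝ × Rn N → ℝ), ContDiff ℝ (⊤ : ℕ∞) g → ∀ q, DifferentiableAt ℝ g q :=
    fun g hg q => (hg.differentiable (by simp)) q
  -- summand smoothness for the B functional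
  have hterm : ∀ a b : Fin N, ∀ c d : Fin N, ContDiff ℝ (⊤ : ℕ∞)
      (fun q => Fd q a b * sderiv c (fun q' => Fd q' i d) q) :=
    fun a b c d => (hFd a b).mul (hsg _ (hFd i d) c)
  have hsummand : ∀ l : Fin N, ContDiff ℝ (⊤ : ℕ∞) (fun q => Fd q l k * sderiv l (fun q' => Fd q' i j) q
      - Fd q l j * sderiv l (fun q' => Fd q' i k) q) :=
    fun l => (hterm l k l j).sub (hterm l j l k)
  -- the substituted right-hand side functions
  set R : Fin N → Fin N → (ℝ × Rn N → ℝ) := fun a b q =>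
    -(∑ m, u q m * sderiv m (fun q' => Fd q' a b) q)
    + ∑ m, sderiv m (fun q => u q a) q * Fd q m b with hR
  have hRs : ∀ a b, ContDiff ℝ (⊤ : ℕ∞) (R a b) := by
    intro a b
    refine ContDiff.add (ContDiff.neg ?_) ?_
    · exact ContDiff.sum fun m _ => (hu m).mul (hsg _ (hFd a b) m)
    · exact ContDiff.sum fun m _ => (hsg _ (hu a) m).mul (hFd m b)
  have slabF : ∀ (y : Rn N) (a b : Fin N),
      tderiv (fun q => Fd q a b) (t, y) = R a b (t, y) := by
    intro y a b
    have h := hdef_t y a b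
    rw [hR]
    simp only []
    linarith
  -- expansion of sderiv l (R i c)
  have expR : ∀ (l : Fin N) (c : Fin N), sderiv l (R i c) (t, x)
      = -(∑ m, (u (t, x) m * sderiv l (sderiv m (fun q' => Fd q' i c)) (t, x)
            + sderiv m (fun q' => Fd q' i c) (t, x) * sderiv l (fun q => u q m) (t, x)))
        + ∑ m, (sderiv m (fun q => u q i) (t, x) * sderiv l (fun q' => Fd q' m c) (t, x)
            + Fd (t, x) m c * sderiv l (sderiv m (fun q => u q i)) (t, x)) := by
    intro l c
    rw [hR]
    simp only []
    have dneg : DifferentiableAt ℝ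
        (fun q => -(∑ m, u q m * sderiv m (fun q' => Fd q' i c) q)) (t, x) :=
      (dAt _ (ContDiff.sum fun m _ => (hu m).mul (hsg _ (hFd i c) m)) _).neg
    have dsum2 : DifferentiableAt ℝ
        (fun q => ∑ m, sderiv m (fun q' => u q' i) q * Fd q m c) (t, x) :=
      dAt _ (ContDiff.sum fun m _ => (hsg _ (hu i) m).mul (hFd m c)) _
    rw [show sderiv l (fun q => -(∑ m, u q m * sderiv m (fun q' => Fd q' i c) q)
        + ∑ m, sderiv m (fun q => u q i) q * Fd q m c) (t, x)
      = sderiv l (fun q => -(∑ m, u q m * sderiv m (fun q' => Fd q' i c) q)) (t, x)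
        + sderiv l (fun q => ∑ m, sderiv m (fun q => u q i) q * Fd q m c) (t, x) from by
        simp only [sderiv_eq_dd]; exact dd_add dneg dsum2 _]
    congr 1
    · rw [show sderiv l (fun q => -(∑ m, u q m * sderiv m (fun q' => Fd q' i c) q)) (t, x)
        = -(sderiv l (fun q => ∑ m, u q m * sderiv m (fun q' => Fd q' i c) q) (t, x)) from by
          simp only [sderiv_eq_dd]; exact dd_neg _]
      congr 1
      rw [show sderiv l (fun q => ∑ m, u q m * sderiv m (fun q' => Fd q' i c) q) (t, x)
        = ∑ m, sderiv l (fun q => u q m * sderiv m (fun q' => Fd q' i c) q) (t, x) from by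
          simp only [sderiv_eq_dd]
          exact dd_sum (fun m _ => dAt _ ((hu m).mul (hsg _ (hFd i c) m)) _) _]
      refine Finset.sum_congr rfl fun m _ => ?_
      simp only [sderiv_eq_dd]
      exact dd_mul (dAt _ (hu m) _) (dAt _ (hsg _ (hFd i c) m) _) _
    · rw [show sderiv l (fun q => ∑ m, sderiv m (fun q => u q i) q * Fd q m c) (t, x)
        = ∑ m, sderiv l (fun q => sderiv m (fun q => u q i) q * Fd q m c) (t, x) from by
          simp only [sderiv_eq_dd]
          exact dd_sum (fun m _ => dAt _ ((hsg _ (hu i) m).mul (hFd m c)) _) _]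
      refine Finset.sum_congr rfl fun m _ => ?_
      simp only [sderiv_eq_dd]
      exact dd_mul (dAt _ (hsg _ (hu i) m) _) (dAt _ (hFd m c) _) _
  -- time derivative of the B functional
  have st1 : tderiv (fun q => ∑ l, (Fd q l k * sderiv l (fun q' => Fd q' i j) q
        - Fd q l j * sderiv l (fun q' => Fd q' i k) q)) (t, x)
      = ∑ l, ((Fd (t, x) l k * sderiv l (R i j) (t, x)
            + sderiv l (fun q' => Fd q' i j) (t, x) * tderiv (fun q => Fd q l k) (t, x))
          - (Fd (t, x) l j * sderiv l (R i k) (t, x)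
            + sderiv l (fun q' => Fd q' i k) (t, x) * tderiv (fun q => Fd q l j) (t, x))) := by
    rw [tderiv_eq_dd, dd_sum (fun l _ => dAt _ (hsummand l) _) ((1:ℝ), (0 : Rn N))]
    refine Finset.sum_congr rfl fun l _ => ?_
    rw [show dd ((1:ℝ), (0 : Rn N)) (fun q => Fd q l k * sderiv l (fun q' => Fd q' i j) q
        - Fd q l j * sderiv l (fun q' => Fd q' i k) q) (t, x)
      = dd ((1:ℝ), (0 : Rn N)) (fun q => Fd q l k * sderiv l (fun q' => Fd q' i j) q) (t, x)
        - dd ((1:ℝ), (0 : Rn N)) (fun q => Fd q l j * sderiv l (fun q' => Fd q' i k) q) (t, x) from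
      dd_sub (dAt _ (hterm l k l j) _) (dAt _ (hterm l j l k) _) _]
    congr 1
    · rw [show dd ((1:ℝ), (0 : Rn N)) (fun q => Fd q l k * sderiv l (fun q' => Fd q' i j) q) (t, x)
        = Fd (t, x) l k * dd ((1:ℝ), (0 : Rn N)) (sderiv l (fun q' => Fd q' i j)) (t, x)
          + sderiv l (fun q' => Fd q' i j) (t, x) * dd ((1:ℝ), (0 : Rn N)) (fun q => Fd q l k) (t, x)
        from dd_mul (dAt _ (hFd l k) _) (dAt _ (hsg _ (hFd i j) l) _) _]
      have c1 : dd ((1:ℝ), (0 : Rn N)) (sderiv l (fun q' => Fd q' i j)) (t, x)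
          = sderiv l (tderiv (fun q' => Fd q' i j)) (t, x) := by
        rw [sderiv_eq_dd, sderiv_eq_dd, tderiv_eq_dd]
        exact dd_comm (hFd i j) _ _ _
      rw [c1, sderiv_congr_slice (dAt _ (htg _ (hFd i j)) _) (dAt _ (hRs i j) _)
        (fun y => slabF y i j) l]
      rfl
    · rw [show dd ((1:ℝ), (0 : Rn N)) (fun q => Fd q l j * sderiv l (fun q' => Fd q' i k) q) (t, x)
        = Fd (t, x) l j * dd ((1:ℝ), (0 : Rn N)) (sderiv l (fun q' => Fd q' i k)) (t, x)
          + sderiv l (fun q' => Fd q' i k) (t, x) * dd ((1:ℝ), (0 : Rn N)) (fun q => Fd q l j) (t, x)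
        from dd_mul (dAt _ (hFd l j) _) (dAt _ (hsg _ (hFd i k) l) _) _]
      have c1 : dd ((1:ℝ), (0 : Rn N)) (sderiv l (fun q' => Fd q' i k)) (t, x)
          = sderiv l (tderiv (fun q' => Fd q' i k)) (t, x) := by
        rw [sderiv_eq_dd, sderiv_eq_dd, tderiv_eq_dd]
        exact dd_comm (hFd i k) _ _ _
      rw [c1, sderiv_congr_slice (dAt _ (htg _ (hFd i k)) _) (dAt _ (hRs i k) _)
        (fun y => slabF y i k) l]
      rfl
  -- values of the time derivatives of Fd on the slab
  have tFval : ∀ a b : Fin N, tderiv (fun q => Fd q a b) (t, x)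
      = ∑ m, sderiv m (fun q => u q a) (t, x) * Fd (t, x) m b
        - ∑ m, u (t, x) m * sderiv m (fun q => Fd q a b) (t, x) := by
    intro a b
    have h := hdef_t x a b
    linarith
  -- expansion of the middle (convection) term
  have stmid : ∀ m : Fin N,
      sderiv m (fun q => ∑ l, (Fd q l k * sderiv l (fun q' => Fd q' i j) q
        - Fd q l j * sderiv l (fun q' => Fd q' i k) q)) (t, x)
      = ∑ l, ((Fd (t, x) l k * sderiv m (sderiv l (fun q' => Fd q' i j)) (t, x)
            + sderiv l (fun q' => Fd q' i j) (t, x) * sderiv m (fun q => Fd q l k) (t, x))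
          - (Fd (t, x) l j * sderiv m (sderiv l (fun q' => Fd q' i k)) (t, x)
            + sderiv l (fun q' => Fd q' i k) (t, x) * sderiv m (fun q => Fd q l j) (t, x))) := by
    intro m
    rw [show sderiv m (fun q => ∑ l, (Fd q l k * sderiv l (fun q' => Fd q' i j) q
        - Fd q l j * sderiv l (fun q' => Fd q' i k) q)) (t, x)
      = ∑ l, sderiv m (fun q => Fd q l k * sderiv l (fun q' => Fd q' i j) q
        - Fd q l j * sderiv l (fun q' => Fd q' i k) q) (t, x) from by
        simp only [sderiv_eq_dd]
        exact dd_sum (fun l _ => dAt _ (hsummand l) _) _]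
    refine Finset.sum_congr rfl fun l _ => ?_
    rw [show sderiv m (fun q => Fd q l k * sderiv l (fun q' => Fd q' i j) q
        - Fd q l j * sderiv l (fun q' => Fd q' i k) q) (t, x)
      = sderiv m (fun q => Fd q l k * sderiv l (fun q' => Fd q' i j) q) (t, x)
        - sderiv m (fun q => Fd q l j * sderiv l (fun q' => Fd q' i k) q) (t, x) from by
        simp only [sderiv_eq_dd]
        exact dd_sub (dAt _ (hterm l k l j) _) (dAt _ (hterm l j l k) _) _]
    congr 1
    · simp only [sderiv_eq_dd]
      exact dd_mul (dAt _ (hFd l k) _) (dAt _ (hsg _ (hFd i j) l) _) _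
    · simp only [sderiv_eq_dd]
      exact dd_mul (dAt _ (hFd l j) _) (dAt _ (hsg _ (hFd i k) l) _) _
  have mid' : ∑ m, u (t, x) m * sderiv m (fun q => ∑ l,
        (Fd q l k * sderiv l (fun q' => Fd q' i j) q
          - Fd q l j * sderiv l (fun q' => Fd q' i k) q)) (t, x)
      = ∑ m, u (t, x) m * ∑ l, ((Fd (t, x) l k * sderiv m (sderiv l (fun q' => Fd q' i j)) (t, x)
            + sderiv l (fun q' => Fd q' i j) (t, x) * sderiv m (fun q => Fd q l k) (t, x))
          - (Fd (t, x) l j * sderiv m (sderiv l (fun q' => Fd q' i k)) (t, x)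
            + sderiv l (fun q' => Fd q' i k) (t, x) * sderiv m (fun q => Fd q l j) (t, x))) :=
    Finset.sum_congr rfl fun m _ => by rw [stmid m]
  rw [st1, mid']
  rw [Finset.sum_congr rfl fun l (_ : l ∈ Finset.univ) => by
    rw [expR l j, expR l k, tFval l k, tFval l j]]
  exact algebraB (fun m => u (t, x) m) (fun a b => sderiv a (fun q => u q b) (t, x))
    (fun a b => Fd (t, x) a b)
    (fun a b c => sderiv a (fun q => Fd q b c) (t, x))
    (fun a b i' => sderiv a (sderiv b (fun q => u q i')) (t, x))
    (fun a b c d => sderiv a (sderiv b (fun q => Fd q c d)) (t, x)) i j k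
    (fun a b i' => by simp only [sderiv_eq_dd]; exact dd_comm (hu i') _ _ _)
    (fun a b c d => by simp only [sderiv_eq_dd]; exact dd_comm (hFd c d) _ _ _)

end TransportB
section Flow

open Set Metric

lemma fderiv_norm_le_iterated {E F : Type*} [NormedAddCommGroup E] [NormedSpace ℝ E]
    [NormedAddCommGroup F] [NormedSpace ℝ F] (f : E → F) (x : E) :
    ‖fderiv ℝ f x‖ ≤ ‖iteratedFDeriv ℝ 1 f x‖ := by
  refine ContinuousLinearMap.opNorm_le_bound _ (norm_nonneg _) fun v => ?_
  have h : fderiv ℝ f x v = iteratedFDeriv ℝ 1 f x (fun _ => v) := by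
    rw [iteratedFDeriv_one_apply]
  rw [h]
  calc ‖iteratedFDeriv ℝ 1 f x (fun _ => v)‖
      ≤ ‖iteratedFDeriv ℝ 1 f x‖ * ∏ _i : Fin 1, ‖v‖ :=
        (iteratedFDeriv ℝ 1 f x).le_opNorm _
    _ = ‖iteratedFDeriv ℝ 1 f x‖ * ‖v‖ := by simp

lemma comp_inr_norm_le {N : ℕ} (L : (ℝ × Rn N) →L[ℝ] ℝ) :
    ‖L.comp (ContinuousLinearMap.inr ℝ ℝ (Rn N))‖ ≤ ‖L‖ := by
  refine ContinuousLinearMap.opNorm_le_bound _ (norm_nonneg L) fun v => ?_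
  have h : ‖(((0:ℝ), v) : ℝ × Rn N)‖ = ‖v‖ := by
    rw [Prod.norm_def]; simp
  calc ‖L ((0:ℝ), v)‖ ≤ ‖L‖ * ‖(((0:ℝ), v) : ℝ × Rn N)‖ := L.le_opNorm _
    _ = ‖L‖ * ‖v‖ := by rw [h]

lemma flow_exists {N : ℕ} {u : ℝ × Rn N → Fin N → ℝ} (hu : ∀ i, ContDiff ℝ (⊤ : ℕ∞) fun q => u q i)
    {T C : ℝ} (hC : 0 ≤ C)
    (hb0 : ∀ q : ℝ × Rn N, q.1 ∈ Set.Icc 0 T → ∀ i, |u q i| ≤ C)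
    (hb1 : ∀ q : ℝ × Rn N, q.1 ∈ Set.Icc 0 T → ∀ i, ‖fderiv ℝ (fun q' => u q' i) q‖ ≤ C)
    {t₁ : ℝ} (ht₁ : t₁ ∈ Set.Icc 0 T) (x : Rn N) :
    ∃ y : ℝ → Rn N, y t₁ = x ∧ ∀ s ∈ Set.Icc 0 t₁,
      HasDerivWithinAt y
        (∑ i, u (s, y s) i • (EuclideanSpace.single i (1:ℝ) : Rn N)) (Set.Icc 0 t₁) s := by
  set U : ℝ → Rn N → Rn N := fun s w => ∑ i, u (s, w) i • EuclideanSpace.single i (1:ℝ) with hU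
  have hsub : Set.Icc (0:ℝ) t₁ ⊆ Set.Icc 0 T := Set.Icc_subset_Icc le_rfl ht₁.2
  have hslice : ∀ (s : ℝ) (i : Fin N) (w : Rn N),
      HasFDerivAt (fun w' => u (s, w') i)
        ((fderiv ℝ (fun q => u q i) (s, w)).comp (ContinuousLinearMap.inr ℝ ℝ (Rn N))) w :=
    fun s i w => ((((hu i).differentiable (by simp)) (s, w)).hasFDerivAt).comp w
      ((hasFDerivAt_const s w).prodMk (hasFDerivAt_id w))
  -- global Lipschitz estimate in space, for times in [0,T]
  have hlip : ∀ s ∈ Set.Icc (0:ℝ) T, LipschitzWith (Real.toNNReal ((N : ℝ) * C)) (U s) := by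
    intro s hs
    refine LipschitzWith.of_dist_le_mul fun y z => ?_
    have hcomp : ∀ i : Fin N, |u (s, y) i - u (s, z) i| ≤ C * ‖y - z‖ := by
      intro i
      have hdiff : ∀ w ∈ (Set.univ : Set (Rn N)), DifferentiableAt ℝ (fun w' => u (s, w') i) w :=
        fun w _ => (hslice s i w).differentiableAt
      have hbound : ∀ w ∈ (Set.univ : Set (Rn N)), ‖fderiv ℝ (fun w' => u (s, w') i) w‖ ≤ C := by
        intro w _
        rw [(hslice s i w).fderiv]
        exact le_trans (comp_inr_norm_le _) (hb1 (s, w) hs i)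
      have := Convex.norm_image_sub_le_of_norm_fderiv_le hdiff hbound convex_univ
        (Set.mem_univ y) (Set.mem_univ z)
      rw [abs_sub_comm, ← norm_sub_rev z y]
      simpa [Real.norm_eq_abs] using this
    have key : ‖U s y - U s z‖ ≤ (N : ℝ) * C * ‖y - z‖ := by
      rw [hU]
      simp only []
      rw [← Finset.sum_sub_distrib]
      calc ‖∑ i, (u (s, y) i • (EuclideanSpace.single i (1:ℝ) : Rn N)
            - u (s, z) i • EuclideanSpace.single i (1:ℝ))‖
          ≤ ∑ i, ‖u (s, y) i • (EuclideanSpace.single i (1:ℝ) : Rn N)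
            - u (s, z) i • EuclideanSpace.single i (1:ℝ)‖ := norm_sum_le _ _
        _ = ∑ i, |u (s, y) i - u (s, z) i| := by
            refine Finset.sum_congr rfl fun i _ => ?_
            rw [← sub_smul, norm_smul, EuclideanSpace.norm_single]
            simp [Real.norm_eq_abs]
        _ ≤ ∑ _i : Fin N, C * ‖y - z‖ := Finset.sum_le_sum fun i _ => hcomp i
        _ = (N : ℝ) * C * ‖y - z‖ := by
            rw [Finset.sum_const, Finset.card_univ, Fintype.card_fin, nsmul_eq_mul]; ring
    calc dist (U s y) (U s z) = ‖U s y - U s z‖ := dist_eq_norm _ _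
      _ ≤ (N : ℝ) * C * ‖y - z‖ := key
      _ ≤ (Real.toNNReal ((N : ℝ) * C) : ℝ) * dist y z := by
          rw [dist_eq_norm, Real.coe_toNNReal']
          exact mul_le_mul_of_nonneg_right (le_max_left _ _) (norm_nonneg _)
  -- norm bound
  have hnorm : ∀ s ∈ Set.Icc (0:ℝ) t₁, ∀ w, ‖U s w‖ ≤ (N : ℝ) * C := by
    intro s hs w
    rw [hU]
    simp only []
    calc ‖∑ i, u (s, w) i • (EuclideanSpace.single i (1:ℝ) : Rn N)‖
        ≤ ∑ i, ‖u (s, w) i • (EuclideanSpace.single i (1:ℝ) : Rn N)‖ := norm_sum_le _ _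
      _ = ∑ i, |u (s, w) i| := by
          refine Finset.sum_congr rfl fun i _ => ?_
          rw [norm_smul, EuclideanSpace.norm_single]
          simp [Real.norm_eq_abs]
      _ ≤ ∑ _i : Fin N, C := Finset.sum_le_sum fun i _ => hb0 (s, w) (hsub hs) i
      _ = (N : ℝ) * C := by
          rw [Finset.sum_const, Finset.card_univ, Fintype.card_fin, nsmul_eq_mul]
  have hT0 : (0:ℝ) ≤ t₁ := ht₁.1
  have hNC : (0:ℝ) ≤ (N : ℝ) * C := mul_nonneg (Nat.cast_nonneg N) hC
  have hPL : IsPicardLindelof U (tmin := 0) (tmax := t₁) ⟨t₁, ⟨hT0, le_rfl⟩⟩ x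
      (Real.toNNReal ((N : ℝ) * C * t₁ + 1)) 0 (Real.toNNReal ((N : ℝ) * C))
      (Real.toNNReal ((N : ℝ) * C)) := by
    constructor
    · exact fun s hs => (hlip s (hsub hs)).lipschitzOnWith
    · intro w _
      apply Continuous.continuousOn
      rw [hU]
      simp only []
      refine continuous_finset_sum _ fun i _ => ?_
      exact (((hu i).continuous).comp (continuous_id.prodMk continuous_const)).smul
        continuous_const
    · exact fun s hs w _ => (hnorm s hs w).trans (Real.le_coe_toNNReal _)
    · have : max (t₁ - t₁) (t₁ - 0) = t₁ := by
        rw [sub_self, sub_zero]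
        exact max_eq_right hT0
      simp only [NNReal.coe_zero, sub_zero, Real.coe_toNNReal _ hNC]
      rw [sub_self, max_eq_right hT0, Real.coe_toNNReal _ (by positivity)]
      nlinarith [mul_nonneg hNC hT0]
  obtain ⟨y, hy0, hy⟩ := hPL.exists_eq_forall_mem_Icc_hasDerivWithinAt₀
  exact ⟨y, hy0, fun s hs => hy s hs⟩

end Flow
noncomputable section Main

open Set

def Afun {N : ℕ} (ρ : ℝ × Rn N → ℝ) (Fd : ℝ × Rn N → Fin N → Fin N → ℝ) (k : Fin N) :
    ℝ × Rn N → ℝ :=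
  fun q => ∑ l, sderiv l (fun q' => ρ q' * Fd q' l k) q

def Bfun {N : ℕ} (Fd : ℝ × Rn N → Fin N → Fin N → ℝ) (i j k : Fin N) : ℝ × Rn N → ℝ :=
  fun q => ∑ l, (Fd q l k * sderiv l (fun q' => Fd q' i j) q
    - Fd q l j * sderiv l (fun q' => Fd q' i k) q)

lemma abs_sderiv_le {N : ℕ} (g : ℝ × Rn N → ℝ) (q : ℝ × Rn N) (m : Fin N) :
    |sderiv m g q| ≤ ‖fderiv ℝ g q‖ := by
  have h1 : ‖(((0:ℝ), EuclideanSpace.single m (1:ℝ)) : ℝ × Rn N)‖ = 1 := by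
    rw [Prod.norm_def]
    simp [EuclideanSpace.norm_single]
  calc |sderiv m g q| = ‖fderiv ℝ g q (((0:ℝ), EuclideanSpace.single m (1:ℝ)) : ℝ × Rn N)‖ := by
        rw [Real.norm_eq_abs]; rfl
    _ ≤ ‖fderiv ℝ g q‖ * ‖(((0:ℝ), EuclideanSpace.single m (1:ℝ)) : ℝ × Rn N)‖ :=
        (fderiv ℝ g q).le_opNorm _
    _ = ‖fderiv ℝ g q‖ := by rw [h1, mul_one]

lemma sum_single_apply {N : ℕ} (a : Fin N → ℝ) (m : Fin N) :
    (∑ i, a i • (EuclideanSpace.single i (1:ℝ) : Rn N)) m = a m := by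
  rw [WithLp.ofLp_sum, Finset.sum_apply]
  simp only [PiLp.smul_apply, EuclideanSpace.single_apply, smul_eq_mul]
  simp

end Main

noncomputable section MainThm

open Set MeasureTheory

theorem constraint_propagation' (N : ℕ) (T : ℝ) (hT : 0 < T)
    (ρ : ℝ × Rn N → ℝ) (u : ℝ × Rn N → Fin N → ℝ) (Fd : ℝ × Rn N → Fin N → Fin N → ℝ)
    (hρ : ContDiff ℝ (⊤ : ℕ∞) ρ) (hu : ∀ i, ContDiff ℝ (⊤ : ℕ∞) fun q => u q i)
    (hFd : ∀ i j, ContDiff ℝ (⊤ : ℕ∞) fun q => Fd q i j)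
    (hub : ∀ i : Fin N, ∃ M : ℝ, ∀ q : ℝ × Rn N, q.1 ∈ Set.Icc 0 T →
      ‖iteratedFDeriv ℝ 0 (fun q' => u q' i) q‖ ≤ M ∧
      ‖iteratedFDeriv ℝ 1 (fun q' => u q' i) q‖ ≤ M)
    (hmass : ∀ t ∈ Set.Icc 0 T, ∀ x : Rn N,
      tderiv ρ (t, x) + ∑ k, sderiv k (fun q => ρ q * u q k) (t, x) = 0)
    (hdef : ∀ t ∈ Set.Icc 0 T, ∀ x : Rn N, ∀ i j,
      tderiv (fun q => Fd q i j) (t, x) +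
        ∑ k, u (t, x) k * sderiv k (fun q => Fd q i j) (t, x) =
        ∑ k, sderiv k (fun q => u q i) (t, x) * Fd (t, x) k j)
    (hinit₁ : ∀ x : Rn N, ∀ k,
      ∑ l, sderiv l (fun q => ρ q * Fd q l k) ((0 : ℝ), x) = 0)
    (hinit₂ : ∀ x : Rn N, ∀ i j k,
      ∑ l, (Fd ((0 : ℝ), x) l k * sderiv l (fun q => Fd q i j) ((0 : ℝ), x) -
            Fd ((0 : ℝ), x) l j * sderiv l (fun q => Fd q i k) ((0 : ℝ), x)) = 0)
    (t₁ : ℝ) (ht₁ : t₁ ∈ Set.Icc 0 T) (x : Rn N) :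
    (∀ k, Afun ρ Fd k (t₁, x) = 0) ∧ (∀ i j k, Bfun Fd i j k (t₁, x) = 0) := by
  classical
  -- uniform bounds for u
  choose M hM using hub
  set C : ℝ := ∑ i, |M i| with hC
  have hCnn : 0 ≤ C := Finset.sum_nonneg fun i _ => abs_nonneg _
  have hb0 : ∀ q : ℝ × Rn N, q.1 ∈ Set.Icc 0 T → ∀ i, |u q i| ≤ C := by
    intro q hq i
    have h := (hM i q hq).1
    rw [norm_iteratedFDeriv_zero, Real.norm_eq_abs] at h
    calc |u q i| ≤ M i := h
      _ ≤ |M i| := le_abs_self _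
      _ ≤ C := Finset.single_le_sum (fun i _ => abs_nonneg (M i)) (Finset.mem_univ i)
  have hb1 : ∀ q : ℝ × Rn N, q.1 ∈ Set.Icc 0 T → ∀ i,
      ‖fderiv ℝ (fun q' => u q' i) q‖ ≤ C := by
    intro q hq i
    have h := (hM i q hq).2
    calc ‖fderiv ℝ (fun q' => u q' i) q‖ ≤ ‖iteratedFDeriv ℝ 1 (fun q' => u q' i) q‖ :=
        fderiv_norm_le_iterated _ _
      _ ≤ M i := h
      _ ≤ |M i| := le_abs_self _
      _ ≤ C := Finset.single_le_sum (fun i _ => abs_nonneg (M i)) (Finset.mem_univ i)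
  have hsd : ∀ q : ℝ × Rn N, q.1 ∈ Set.Icc 0 T → ∀ m i, |sderiv m (fun q' => u q' i) q| ≤ C :=
    fun q hq m i => le_trans (abs_sderiv_le _ _ _) (hb1 q hq i)
  -- smoothness
  have hsg : ∀ (g : ℝ × Rn N → ℝ), ContDiff ℝ (⊤ : ℕ∞) g → ∀ m : Fin N,
      ContDiff ℝ (⊤ : ℕ∞) (sderiv m g) := by
    intro g hg m; rw [sderiv_eq_dd]; exact dd_smooth hg _
  have hAs : ∀ k, ContDiff ℝ (⊤ : ℕ∞) (Afun ρ Fd k) :=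
    fun k => ContDiff.sum fun l _ => hsg _ (hρ.mul (hFd l k)) l
  have hBs : ∀ i j k, ContDiff ℝ (⊤ : ℕ∞) (Bfun Fd i j k) :=
    fun i j k => ContDiff.sum fun l _ =>
      ((hFd l k).mul (hsg _ (hFd i j) l)).sub ((hFd l j).mul (hsg _ (hFd i k) l))
  -- flow
  obtain ⟨y, hyx, hy⟩ := flow_exists hu hCnn hb0 hb1 ht₁ x
  have hpmem : ∀ s ∈ Set.Icc (0:ℝ) t₁, s ∈ Set.Icc 0 T :=
    fun s hs => ⟨hs.1, hs.2.trans ht₁.2⟩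
  -- derivative of observables along the flow
  have obs : ∀ (g : ℝ × Rn N → ℝ), ContDiff ℝ (⊤ : ℕ∞) g → ∀ s ∈ Set.Icc (0:ℝ) t₁,
      HasDerivWithinAt (fun s' => g (s', y s'))
        (tderiv g (s, y s) + ∑ m, u (s, y s) m * sderiv m g (s, y s)) (Set.Icc 0 t₁) s := by
    intro g hg s hs
    have hps : HasDerivWithinAt (fun s' => ((s', y s') : ℝ × Rn N))
        ((1 : ℝ), ∑ i, u (s, y s) i • (EuclideanSpace.single i (1:ℝ) : Rn N))
        (Set.Icc 0 t₁) s :=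
      (hasDerivWithinAt_id s _).prodMk (hy s hs)
    have hgd : HasFDerivAt g (fderiv ℝ g (s, y s)) (s, y s) :=
      ((hg.differentiable (by simp)) _).hasFDerivAt
    have hcomp := hgd.comp_hasDerivWithinAt s hps
    have heq : fderiv ℝ g (s, y s)
        ((1 : ℝ), ∑ i, u (s, y s) i • (EuclideanSpace.single i (1:ℝ) : Rn N))
        = tderiv g (s, y s) + ∑ m, u (s, y s) m * sderiv m g (s, y s) := by
      rw [fderiv_apply_decomp]
      congr 1
      exact Finset.sum_congr rfl fun m _ => by rw [sum_single_apply]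
    rw [heq] at hcomp
    exact hcomp
  -- the combined observable and its derivative
  have hzderiv : ∀ s ∈ Set.Icc (0:ℝ) t₁, HasDerivWithinAt
      (fun s' => ((fun k => Afun ρ Fd k (s', y s'), fun i j k => Bfun Fd i j k (s', y s')) :
        (Fin N → ℝ) × (Fin N → Fin N → Fin N → ℝ)))
      ((fun k => -(∑ m, sderiv m (fun q => u q m) (s, y s)) * Afun ρ Fd k (s, y s),
        fun i j k => ∑ m, sderiv m (fun q => u q i) (s, y s) * Bfun Fd m j k (s, y s)))
      (Set.Icc 0 t₁) s := by
    intro s hs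
    have hsT : s ∈ Set.Icc (0:ℝ) T := hpmem s hs
    refine HasDerivWithinAt.prodMk ?_ ?_
    · rw [hasDerivWithinAt_pi]
      intro k
      have h1 := obs (Afun ρ Fd k) (hAs k) s hs
      have h2 := transportA hρ hu hFd (fun y' => hmass s hsT y')
        (fun y' i' j' => hdef s hsT y' i' j') (y s) k
      have h3 : tderiv (Afun ρ Fd k) (s, y s)
            + ∑ m, u (s, y s) m * sderiv m (Afun ρ Fd k) (s, y s)
          = -(∑ m, sderiv m (fun q => u q m) (s, y s)) * Afun ρ Fd k (s, y s) := by
        have h2' : tderiv (Afun ρ Fd k) (s, y s)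
            + ∑ m, u (s, y s) m * sderiv m (Afun ρ Fd k) (s, y s)
            + (∑ m, sderiv m (fun q => u q m) (s, y s)) * Afun ρ Fd k (s, y s) = 0 := h2
        linarith
      rw [h3] at h1
      exact h1
    · rw [hasDerivWithinAt_pi]
      intro i
      rw [hasDerivWithinAt_pi]
      intro j
      rw [hasDerivWithinAt_pi]
      intro k
      have h1 := obs (Bfun Fd i j k) (hBs i j k) s hs
      have h2 := transportB hu hFd (fun y' i' j' => hdef s hsT y' i' j') (y s) i j k
      have h3 : tderiv (Bfun Fd i j k) (s, y s)
            + ∑ m, u (s, y s) m * sderiv m (Bfun Fd i j k) (s, y s)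
          = ∑ m, sderiv m (fun q => u q i) (s, y s) * Bfun Fd m j k (s, y s) := by
        have h2' : tderiv (Bfun Fd i j k) (s, y s)
            + ∑ m, u (s, y s) m * sderiv m (Bfun Fd i j k) (s, y s)
            - ∑ m, sderiv m (fun q => u q i) (s, y s) * Bfun Fd m j k (s, y s) = 0 := h2
        linarith
      rw [h3] at h1
      exact h1
  -- Gronwall
  set z : ℝ → (Fin N → ℝ) × (Fin N → Fin N → Fin N → ℝ) :=
    fun s' => (fun k => Afun ρ Fd k (s', y s'), fun i j k => Bfun Fd i j k (s', y s')) with hzdef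
  have hcont : ContinuousOn z (Set.Icc 0 t₁) := fun s hs =>
    (hzderiv s hs).continuousWithinAt
  have hz0 : z 0 = 0 := by
    rw [hzdef]
    refine Prod.ext ?_ ?_
    · funext k
      exact hinit₁ (y 0) k
    · funext i j k
      exact hinit₂ (y 0) i j k
  have hbound : ∀ s ∈ Set.Ico (0:ℝ) t₁,
      ‖((fun k => -(∑ m, sderiv m (fun q => u q m) (s, y s)) * Afun ρ Fd k (s, y s),
        fun i j k => ∑ m, sderiv m (fun q => u q i) (s, y s) * Bfun Fd m j k (s, y s)) :
        (Fin N → ℝ) × (Fin N → Fin N → Fin N → ℝ))‖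
      ≤ (N : ℝ) * C * ‖z s‖ + 0 := by
    intro s hs
    have hsT : s ∈ Set.Icc (0:ℝ) T := hpmem s ⟨hs.1, le_of_lt hs.2⟩
    have hKnn : 0 ≤ (N : ℝ) * C * ‖z s‖ :=
      mul_nonneg (mul_nonneg (Nat.cast_nonneg N) hCnn) (norm_nonneg _)
    rw [add_zero, Prod.norm_def]
    have hdivb : |∑ m, sderiv m (fun q => u q m) (s, y s)| ≤ (N : ℝ) * C := by
      calc |∑ m, sderiv m (fun q => u q m) (s, y s)|
          ≤ ∑ m, |sderiv m (fun q => u q m) (s, y s)| := Finset.abs_sum_le_sum_abs _ _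
        _ ≤ ∑ _m : Fin N, C := Finset.sum_le_sum fun m _ => hsd (s, y s) hsT m m
        _ = (N : ℝ) * C := by
            rw [Finset.sum_const, Finset.card_univ, Fintype.card_fin, nsmul_eq_mul]
    have hAle : ∀ k, |Afun ρ Fd k (s, y s)| ≤ ‖z s‖ := by
      intro k
      calc |Afun ρ Fd k (s, y s)| = ‖(z s).1 k‖ := by rw [Real.norm_eq_abs]
        _ ≤ ‖(z s).1‖ := norm_le_pi_norm _ k
        _ ≤ ‖z s‖ := norm_fst_le _
    have hBle : ∀ m j k, |Bfun Fd m j k (s, y s)| ≤ ‖z s‖ := by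
      intro m j k
      calc |Bfun Fd m j k (s, y s)| = ‖(z s).2 m j k‖ := by rw [Real.norm_eq_abs]
        _ ≤ ‖(z s).2 m j‖ := norm_le_pi_norm _ k
        _ ≤ ‖(z s).2 m‖ := norm_le_pi_norm _ j
        _ ≤ ‖(z s).2‖ := norm_le_pi_norm _ m
        _ ≤ ‖z s‖ := norm_snd_le _
    refine max_le ?_ ?_
    · rw [pi_norm_le_iff_of_nonneg hKnn]
      intro k
      rw [Real.norm_eq_abs, abs_mul, abs_neg]
      calc |∑ m, sderiv m (fun q => u q m) (s, y s)| * |Afun ρ Fd k (s, y s)|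
          ≤ ((N : ℝ) * C) * ‖z s‖ :=
            mul_le_mul hdivb (hAle k) (abs_nonneg _)
              (mul_nonneg (Nat.cast_nonneg N) hCnn)
        _ = (N : ℝ) * C * ‖z s‖ := by ring
    · rw [pi_norm_le_iff_of_nonneg hKnn]
      intro i
      rw [pi_norm_le_iff_of_nonneg hKnn]
      intro j
      rw [pi_norm_le_iff_of_nonneg hKnn]
      intro k
      rw [Real.norm_eq_abs]
      calc |∑ m, sderiv m (fun q => u q i) (s, y s) * Bfun Fd m j k (s, y s)|
          ≤ ∑ m, |sderiv m (fun q => u q i) (s, y s) * Bfun Fd m j k (s, y s)| :=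
            Finset.abs_sum_le_sum_abs _ _
        _ ≤ ∑ _m : Fin N, C * ‖z s‖ := by
            refine Finset.sum_le_sum fun m _ => ?_
            rw [abs_mul]
            exact mul_le_mul (hsd (s, y s) hsT m i) (hBle m j k) (abs_nonneg _) hCnn
        _ = (N : ℝ) * C * ‖z s‖ := by
            rw [Finset.sum_const, Finset.card_univ, Fintype.card_fin, nsmul_eq_mul]; ring
  have hgron := norm_le_gronwallBound_of_norm_deriv_right_le (f := z)
    (f' := fun s => ((fun k => -(∑ m, sderiv m (fun q => u q m) (s, y s)) *
        Afun ρ Fd k (s, y s),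
      fun i j k => ∑ m, sderiv m (fun q => u q i) (s, y s) * Bfun Fd m j k (s, y s)) :
      (Fin N → ℝ) × (Fin N → Fin N → Fin N → ℝ)))
    (δ := 0) (K := (N : ℝ) * C) (ε := 0) (a := 0) (b := t₁)
    hcont
    (fun s hs => by
      have h := hzderiv s ⟨hs.1, le_of_lt hs.2⟩
      refine h.mono_of_mem_nhdsWithin ?_
      have h1 : Set.Icc s t₁ ∈ nhdsWithin s (Set.Ici s) :=
        Icc_mem_nhdsGE hs.2
      exact Filter.mem_of_superset h1 (Set.Icc_subset_Icc hs.1 le_rfl))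
    (by rw [hz0]; simp)
    hbound
  have hzt : z t₁ = 0 := by
    have h := hgron t₁ ⟨ht₁.1, le_rfl⟩
    rw [gronwallBound_ε0] at h
    simp only [zero_mul] at h
    exact norm_le_zero_iff.mp h
  have hz1 : (z t₁).1 = fun k => Afun ρ Fd k (t₁, x) := by
    simp only [hzdef]
    rw [hyx]
  have hz2 : (z t₁).2 = fun i j k => Bfun Fd i j k (t₁, x) := by
    simp only [hzdef]
    rw [hyx]
  constructor
  · intro k
    have := congrFun (hz1.symm.trans (congrArg Prod.fst hzt)) k
    exact this
  · intro i j k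
    have := congrFun (congrFun (congrFun (hz2.symm.trans (congrArg Prod.snd hzt)) i) j) k
    exact this

end MainThm

end AuxDev

/-- **Propagation of the constraints `div(ρFᵀ) = 0` and
`F^{lk}∂_l F^{ij} − F^{lj}∂_l F^{ik} = 0` (Prop. 3.1):** if a smooth solution
`(ρ, u, F)` of `∂_t ρ + div(ρu) = 0`, `∂_t F^{ij} + u^k ∂_k F^{ij} = ∂_k u^i F^{kj}`
satisfies the constraints at `t = 0`, then it satisfies them for all `t ∈ [0,T]`. -/
theorem constraint_propagation (N : ℕ) (hN : 2 ≤ N) (T : ℝ) (hT : 0 < T)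
    (ρ : ℝ × Rn N → ℝ) (u : ℝ × Rn N → Fin N → ℝ) (Fd : ℝ × Rn N → Fin N → Fin N → ℝ)
    (hρ : ContDiff ℝ (⊤ : ℕ∞) ρ) (hu : ∀ i, ContDiff ℝ (⊤ : ℕ∞) fun q => u q i)
    (hFd : ∀ i j, ContDiff ℝ (⊤ : ℕ∞) fun q => Fd q i j)
    (hρpos : ∀ q, 0 < ρ q)
    (hρgood : goodField N T fun q => ρ q - 1)
    (hugood : ∀ i, goodField N T fun q => u q i)
    (hFgood : ∀ i j, goodField N T fun q => Fd q i j - (if i = j then 1 else 0))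
    (hmass : ∀ t ∈ Set.Icc 0 T, ∀ x : Rn N,
      tderiv ρ (t, x) + ∑ k, sderiv k (fun q => ρ q * u q k) (t, x) = 0)
    (hdef : ∀ t ∈ Set.Icc 0 T, ∀ x : Rn N, ∀ i j,
      tderiv (fun q => Fd q i j) (t, x) +
        ∑ k, u (t, x) k * sderiv k (fun q => Fd q i j) (t, x) =
        ∑ k, sderiv k (fun q => u q i) (t, x) * Fd (t, x) k j)
    (hinit₁ : ∀ x : Rn N, ∀ k,
      ∑ l, sderiv l (fun q => ρ q * Fd q l k) ((0 : ℝ), x) = 0)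
    (hinit₂ : ∀ x : Rn N, ∀ i j k,
      ∑ l, (Fd ((0 : ℝ), x) l k * sderiv l (fun q => Fd q i j) ((0 : ℝ), x) -
            Fd ((0 : ℝ), x) l j * sderiv l (fun q => Fd q i k) ((0 : ℝ), x)) = 0) :
    (∀ t ∈ Set.Icc 0 T, ∀ x : Rn N, ∀ k,
      ∑ l, sderiv l (fun q => ρ q * Fd q l k) (t, x) = 0) ∧
    (∀ t ∈ Set.Icc 0 T, ∀ x : Rn N, ∀ i j k,
      ∑ l, (Fd (t, x) l k * sderiv l (fun q => Fd q i j) (t, x) -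
            Fd (t, x) l j * sderiv l (fun q => Fd q i k) (t, x)) = 0) := by
  have hub : ∀ i : Fin N, ∃ M : ℝ, ∀ q : ℝ × Rn N, q.1 ∈ Set.Icc 0 T →
      ‖iteratedFDeriv ℝ 0 (fun q' => u q' i) q‖ ≤ M ∧
      ‖iteratedFDeriv ℝ 1 (fun q' => u q' i) q‖ ≤ M := by
    intro i
    obtain ⟨M₀, hM₀⟩ := (hugood i).1 0
    obtain ⟨M₁, hM₁⟩ := (hugood i).1 1
    exact ⟨max M₀ M₁, fun q hq => ⟨le_trans (hM₀ q hq) (le_max_left _ _),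
      le_trans (hM₁ q hq) (le_max_right _ _)⟩⟩
  constructor
  · intro t ht x k
    exact (constraint_propagation' N T hT ρ u Fd hρ hu hFd hub hmass hdef hinit₁ hinit₂
      t ht x).1 k
  · intro t ht x i j k
    exact (constraint_propagation' N T hT ρ u Fd hρ hu hFd hub hmass hdef hinit₁ hinit₂
      t ht x).2 i j k

end
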